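/- arXiv:1509.03901 — 6 statements merged into one kernel-verified Lean document; each statement's English description precedes it below -/
import Mathlib

section
/- Let S₁ ⊇ S₂ ⊇ S₃ ⊇ … be a descending chain of subsets of ℤ such that for every j ∈ ℕ, every translate of S_j is a set of recurrence. Then there exists a set S ⊆ ℤ such that S \ S_j is finite for every j and every translate of S is a set of recurrence. -/
noncomputable section

/-- A measure preserving system: a probability space together with an invertible
measure preserving transformation. -/
structure MPSystem where
  X : Type
  [mX : MeasurableSpace X]
  μ : MeasureTheory.Measure X
  prob : MeasureTheory.IsProbabilityMeasure μ
  T : X ≃ᵐ X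
  mp : MeasureTheory.MeasurePreserving T μ μ

attribute [instance] MPSystem.mX

open MeasureTheory Set Filter

/-- The `n`-th iterate of `T` (`n ∈ ℤ`), as a bijection of `X`; the image
`𝒮.iter n '' D` is the set `T^n D`. -/
def MPSystem.iter (𝒮 : MPSystem) (n : ℤ) : 𝒮.X ≃ 𝒮.X := (𝒮.T.toEquiv) ^ n

/-- The translate `S + m` of a set of integers. -/
def zTranslate (S : Set ℤ) (m : ℤ) : Set ℤ := (fun s => s + m) '' S

/-- `S` is a set of recurrence. -/
def IsRecurrenceSet (S : Set ℤ) : Prop :=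
  ∀ 𝒮 : MPSystem, ∀ D : Set 𝒮.X, MeasurableSet D → 0 < 𝒮.μ D →
    ∃ n ∈ S, 0 < 𝒮.μ (D ∩ 𝒮.iter n '' D)

/-! A set of recurrence `S` is uniformly so: for every `ε > 0` a finite `F ⊆ S` already contains
a return time for every system and every `D` with `μ D ≥ ε`. Otherwise the counterexamples for
`F = S ∩ [-k, k]` are coded, through the itineraries `x ↦ (1_D (T^m x))_m`, by shift-invariant
measures on `{0,1}^ℤ`; a weak limit of these is an invariant measure for which the cylinder
`{y | y 0}` has mass `≥ ε` but, cylinders being clopen, no return time in `S`.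

For the theorem, enumerate the pairs `(m, l)` as `k ↦ (m_k, l_k)` and take for `S'` the union of
the finite sets `F_k - m_k`, where `F_k ⊆ S_k + m_k` works for precision `1 / l_k`. The `k`-th
piece lies in `S_k`, so only finitely many pieces leave a given `S_j`. -/

open scoped ENNReal Topology

attribute [instance] MPSystem.prob

lemma mem_zTranslate {S : Set ℤ} {m n : ℤ} : n ∈ zTranslate S m ↔ n - m ∈ S := by
  simp [zTranslate, sub_eq_add_neg]

lemma Set.Finite.zTranslate {S : Set ℤ} (hS : S.Finite) (m : ℤ) : (zTranslate S m).Finite :=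
  hS.image _

namespace MPSystem

variable (𝒮 : MPSystem)

lemma iter_apply_T (n : ℤ) (x : 𝒮.X) : 𝒮.iter n (𝒮.T x) = 𝒮.iter (n + 1) x := by
  simp only [iter, zpow_add_one, Equiv.Perm.mul_apply]
  rfl

lemma measurable_iter (n : ℤ) : Measurable (𝒮.iter n) := by
  induction n using Int.induction_on with
  | zero => exact measurable_id
  | succ k ih =>
    rw [iter, zpow_add_one, Equiv.Perm.coe_mul]
    exact ih.comp 𝒮.T.measurable
  | pred k ih =>
    rw [iter, zpow_sub_one, Equiv.Perm.coe_mul, Equiv.Perm.inv_def]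
    exact ih.comp 𝒮.T.symm.measurable

lemma image_iter (n : ℤ) (D : Set 𝒮.X) : 𝒮.iter n '' D = 𝒮.iter (-n) ⁻¹' D := by
  rw [Equiv.image_eq_preimage_symm, iter, iter, zpow_neg, Equiv.Perm.inv_def]

end MPSystem

def shift : (ℤ → Bool) ≃ᵐ (ℤ → Bool) where
  toFun y m := y (m + 1)
  invFun y m := y (m - 1)
  left_inv y := by simp
  right_inv y := by simp
  measurable_toFun := measurable_pi_lambda _ fun m => measurable_pi_apply (m + 1)
  measurable_invFun := measurable_pi_lambda _ fun m => measurable_pi_apply (m - 1)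

lemma continuous_shift : Continuous shift :=
  continuous_pi fun m => continuous_apply (m + 1)

lemma shift_zpow_apply (k : ℤ) (y : ℤ → Bool) (m : ℤ) :
    (shift.toEquiv ^ k) y m = y (m + k) := by
  induction k using Int.induction_on generalizing y m with
  | zero => simp
  | succ k ih =>
    rw [zpow_add_one, Equiv.Perm.mul_apply, ih]
    simp [shift, add_assoc]
  | pred k ih =>
    rw [zpow_sub_one, Equiv.Perm.mul_apply, ih, Equiv.Perm.inv_def]
    simp [shift, add_sub_assoc']

def shiftCylinder (m : ℤ) : Set (ℤ → Bool) := {y | y m = true}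

lemma isClopen_shiftCylinder (m : ℤ) : IsClopen (shiftCylinder m) :=
  (isClopen_discrete {true}).preimage (continuous_apply m)

lemma measurableSet_shiftCylinder (m : ℤ) : MeasurableSet (shiftCylinder m) :=
  (isClopen_shiftCylinder m).isOpen.measurableSet

def shiftSystem (ν : Measure (ℤ → Bool)) [IsProbabilityMeasure ν]
    (hν : MeasurePreserving shift ν ν) : MPSystem where
  X := ℤ → Bool
  μ := ν
  prob := ‹_›
  T := shift
  mp := hν

lemma shiftSystem_iter_image (ν : Measure (ℤ → Bool)) [IsProbabilityMeasure ν]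
    (hν : MeasurePreserving shift ν ν) (n : ℤ) :
    (shiftSystem ν hν).iter n '' shiftCylinder 0 = shiftCylinder (-n) := by
  refine ((shiftSystem ν hν).image_iter n _).trans ?_
  ext (y : ℤ → Bool)
  change (shift.toEquiv ^ (-n)) y 0 = true ↔ y (-n) = true
  rw [shift_zpow_apply, zero_add]

namespace MPSystem

variable (𝒮 : MPSystem) {D : Set 𝒮.X}

open scoped Classical in
def itinerary (D : Set 𝒮.X) (x : 𝒮.X) : ℤ → Bool := fun m => decide (𝒮.iter m x ∈ D)

lemma measurable_itinerary (hD : MeasurableSet D) : Measurable (𝒮.itinerary D) :=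
  measurable_pi_lambda _ fun m => measurable_to_bool <| by
    convert 𝒮.measurable_iter m hD using 1
    ext x
    simp [itinerary]

lemma itinerary_T (x : 𝒮.X) : 𝒮.itinerary D (𝒮.T x) = shift (𝒮.itinerary D x) := by
  funext m
  simp [itinerary, shift, iter_apply_T]

lemma preimage_itinerary_shiftCylinder (m : ℤ) :
    𝒮.itinerary D ⁻¹' shiftCylinder m = 𝒮.iter m ⁻¹' D := by
  ext x
  simp [itinerary, shiftCylinder]

lemma preimage_itinerary_inter_shiftCylinder (n : ℤ) :
    𝒮.itinerary D ⁻¹' (shiftCylinder 0 ∩ shiftCylinder (-n)) = D ∩ 𝒮.iter n '' D := by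
  rw [preimage_inter, preimage_itinerary_shiftCylinder, preimage_itinerary_shiftCylinder,
    image_iter]
  rfl

lemma measurePreserving_shift_map_itinerary (hD : MeasurableSet D) :
    MeasurePreserving shift (𝒮.μ.map (𝒮.itinerary D)) (𝒮.μ.map (𝒮.itinerary D)) := by
  refine ⟨shift.measurable, ?_⟩
  rw [Measure.map_map shift.measurable (𝒮.measurable_itinerary hD)]
  have : shift ∘ 𝒮.itinerary D = 𝒮.itinerary D ∘ 𝒮.T := funext fun x => (𝒮.itinerary_T x).symm
  rw [this, ← Measure.map_map (𝒮.measurable_itinerary hD) 𝒮.T.measurable, 𝒮.mp.map_eq]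

end MPSystem

lemma exists_shift_invariant_limit (ν : ℕ → ProbabilityMeasure (ℤ → Bool))
    (hν : ∀ k, MeasurePreserving shift (ν k) (ν k)) :
    ∃ (ν' : ProbabilityMeasure (ℤ → Bool)) (φ : ℕ → ℕ), StrictMono φ ∧
      MeasurePreserving shift ν' ν' ∧ ∀ C, IsClopen C →
        Tendsto (fun i => (ν (φ i) : Measure (ℤ → Bool)) C) atTop (𝓝 ((ν' : Measure _) C)) := by
  obtain ⟨ν', φ, hφ, hlim⟩ := CompactSpace.tendsto_subseq ν
  refine ⟨ν', φ, hφ, ⟨shift.measurable, ?_⟩, fun C hC =>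
    ProbabilityMeasure.tendsto_measure_of_null_frontier_of_tendsto' hlim (by simp [hC.frontier_eq])⟩
  have hmap := ProbabilityMeasure.tendsto_map_of_tendsto_of_continuous _ _ hlim continuous_shift
  have hfix : (fun i => ((ν ∘ φ) i).map continuous_shift.measurable.aemeasurable) = ν ∘ φ :=
    funext fun i => Subtype.ext (hν (φ i)).map_eq
  rw [hfix] at hmap
  exact congrArg ProbabilityMeasure.toMeasure (tendsto_nhds_unique hmap hlim)

theorem IsRecurrenceSet.exists_finset_of_le_measure {S : Set ℤ} (hS : IsRecurrenceSet S)
    {ε : ℝ≥0∞} (hε : 0 < ε) :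
    ∃ F : Finset ℤ, ↑F ⊆ S ∧ ∀ (𝒮 : MPSystem) (D : Set 𝒮.X), MeasurableSet D → ε ≤ 𝒮.μ D →
      ∃ n ∈ F, 0 < 𝒮.μ (D ∩ 𝒮.iter n '' D) := by
  classical
  by_contra! h
  let F (k : ℕ) : Finset ℤ := {n ∈ Finset.Icc (-(k : ℤ)) k | n ∈ S}
  choose 𝒮 D hD hεD hnull using fun k => h (F k) fun n hn => (Finset.mem_filter.1 hn).2
  let ν (k : ℕ) : ProbabilityMeasure (ℤ → Bool) :=
    ⟨(𝒮 k).μ.map ((𝒮 k).itinerary (D k)),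
      Measure.isProbabilityMeasure_map ((𝒮 k).measurable_itinerary (hD k)).aemeasurable⟩
  have hν (k : ℕ) (C : Set (ℤ → Bool)) (hC : MeasurableSet C) :
      (ν k : Measure (ℤ → Bool)) C = (𝒮 k).μ ((𝒮 k).itinerary (D k) ⁻¹' C) :=
    Measure.map_apply ((𝒮 k).measurable_itinerary (hD k)) hC
  obtain ⟨ν', φ, hφ, hν', hlim⟩ := exists_shift_invariant_limit ν fun k =>
    (𝒮 k).measurePreserving_shift_map_itinerary (hD k)
  have hpos : 0 < (ν' : Measure (ℤ → Bool)) (shiftCylinder 0) := by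
    refine hε.trans_le (ge_of_tendsto (hlim _ (isClopen_shiftCylinder 0)) (.of_forall fun i => ?_))
    rw [hν _ _ (measurableSet_shiftCylinder 0), MPSystem.preimage_itinerary_shiftCylinder]
    exact hεD (φ i)
  obtain ⟨n, hnS, hret⟩ := hS (shiftSystem ν' hν') _ (measurableSet_shiftCylinder 0) hpos
  replace hret : 0 < (ν' : Measure (ℤ → Bool)) (shiftCylinder 0 ∩ shiftCylinder (-n)) :=
    shiftSystem_iter_image ν' hν' n ▸ hret
  refine hret.ne' (tendsto_nhds_unique (hlim _ ((isClopen_shiftCylinder 0).inter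
    (isClopen_shiftCylinder (-n)))) (tendsto_const_nhds.congr' ?_))
  filter_upwards [eventually_ge_atTop n.natAbs] with i hi
  have hnF : n ∈ F (φ i) := by
    have := hφ.le_apply (x := i)
    simp only [F, Finset.mem_filter, Finset.mem_Icc]
    exact ⟨by omega, hnS⟩
  rw [hν _ _ ((measurableSet_shiftCylinder 0).inter (measurableSet_shiftCylinder (-n))),
    MPSystem.preimage_itinerary_inter_shiftCylinder]
  exact (hnull (φ i) n hnF).antisymm' bot_le

/-- If `S₁ ⊇ S₂ ⊇ ⋯` is a descending chain of subsets of `ℤ` such that every translate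
of each `S_j` is a set of recurrence, then there is a set `S` with `S \ S_j` finite for
every `j`, every translate of which is a set of recurrence. -/
theorem statement8 (S : ℕ → Set ℤ) (hchain : ∀ j : ℕ, S (j + 1) ⊆ S j)
    (hrec : ∀ (j : ℕ) (m : ℤ), IsRecurrenceSet (zTranslate (S j) m)) :
    ∃ S' : Set ℤ, (∀ j : ℕ, (S' \ S j).Finite) ∧
      ∀ m : ℤ, IsRecurrenceSet (zTranslate S' m) := by
  have hanti : Antitone S := antitone_nat_of_succ_le hchain
  let e : ℕ ≃ ℤ × ℕ := (Denumerable.eqv (ℤ × ℕ)).symm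
  choose F hFS hF using fun k : ℕ => (hrec k (e k).1).exists_finset_of_le_measure
    (ENNReal.inv_pos.2 (ENNReal.natCast_ne_top (e k).2))
  have hFS' (k : ℕ) : zTranslate (F k) (-(e k).1) ⊆ S k := fun n hn => by
    simpa using mem_zTranslate.1 (hFS k (mem_zTranslate.1 hn))
  refine ⟨⋃ k, zTranslate (F k) (-(e k).1), fun j => ?_, fun m 𝒮 D hD hμD => ?_⟩
  · refine ((Set.finite_lt_nat j).biUnion fun k _ =>
      (F k).finite_toSet.zTranslate (-(e k).1)).subset ?_
    rintro n ⟨hn, hnj⟩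
    obtain ⟨k, hk⟩ := mem_iUnion.1 hn
    exact mem_biUnion (lt_of_not_ge fun hjk => hnj (hanti hjk (hFS' k hk))) hk
  · obtain ⟨l, hl⟩ := ENNReal.exists_inv_nat_lt hμD.ne'
    obtain ⟨n, hnF, hn⟩ := hF (e.symm (m, l)) 𝒮 D hD (by simpa using hl.le)
    refine ⟨n, mem_zTranslate.2 (mem_iUnion.2 ⟨e.symm (m, l), mem_zTranslate.2 ?_⟩), hn⟩
    simpa using hnF
end
end

section
/- Let (X,T) be a uniquely ergodic topological system on a totally disconnected compact metric space X whose unique T-invariant Borel probability measure μ is continuous (atomless). Then for every ε > 0 there exists a clopen set D ⊆ X with μ(D) > 1/2 − ε and D ∩ TD = ∅. -/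
/-!
A periodic orbit carries an invariant probability measure with an atom, so unique ergodicity
with an atomless `μ` makes `T` aperiodic. For an aperiodic homeomorphism of a compact
zero-dimensional space, a greedy pass over a finite clopen cover gives, for each `n`, a clopen
marker set `F` whose preimages `F, T⁻¹F, …, T⁻ⁿF` are pairwise disjoint and which every forward
orbit enters; invariance then gives `μ F ≤ 1/(n+1)`.

Let `D` be the set of points whose first entrance time into `F` is odd. Off `F`, `T` lowers the
entrance time by one, so `D ∩ TD = ∅` and `T⁻¹(X \ D) ⊆ D ∪ F`; by invariance
`1 - μ D ≤ μ D + μ F`, i.e. `μ D ≥ (1 - μ F)/2`.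
-/

open MeasureTheory Set Function Filter Topology

section PeriodicOrbit

variable {X : Type*} [MeasurableSpace X] {f : X → X} {p : ℕ} {x : X}

theorem Function.IsPeriodicPt.measurePreserving_sum_dirac (hf : Measurable f)
    (hx : IsPeriodicPt f p x) :
    MeasurePreserving f (∑ i : Fin p, Measure.dirac (f^[i] x))
      (∑ i : Fin p, Measure.dirac (f^[i] x)) := by
  refine ⟨hf, ?_⟩
  rw [← Measure.mapₗ_apply_of_measurable hf, map_sum]
  simp only [Measure.mapₗ_apply_of_measurable hf, Measure.map_dirac' hf, ← iterate_succ_apply' f]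
  rcases p with _ | p
  · simp
  refine Fintype.sum_equiv (finRotate (p + 1)) _ _ fun i => ?_
  rw [coe_finRotate]
  split_ifs with h
  · simp [h, hx.eq]
  · rfl

theorem Function.IsPeriodicPt.exists_isProbabilityMeasure_measurePreserving (hf : Measurable f)
    (hp : 0 < p) (hx : IsPeriodicPt f p x) :
    ∃ ν : Measure X, IsProbabilityMeasure ν ∧ MeasurePreserving f ν ν ∧ ν {x} ≠ 0 := by
  set ν := ∑ i : Fin p, Measure.dirac (f^[i] x)
  have hν : ν univ = p := by simp [ν]
  refine ⟨(p : ENNReal)⁻¹ • ν, ⟨?_⟩, ?_, ?_⟩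
  · rw [Measure.smul_apply, hν, smul_eq_mul, ENNReal.inv_mul_cancel (by simp [hp.ne']) (by simp)]
  · exact (hx.measurePreserving_sum_dirac hf).smul_measure _
  · have : ν {x} ≠ 0 := by
      simp only [ν, Measure.coe_finsetSum, Finset.sum_apply, ne_eq, Finset.sum_eq_zero_iff,
        not_forall]
      exact ⟨⟨0, hp⟩, Finset.mem_univ _, by simp [Measure.dirac_apply_of_mem]⟩
    simp [this]

theorem not_isPeriodicPt_of_forall_measurePreserving_eq (hf : Measurable f) {μ : Measure X}
    [NullSingletonClass μ]
    (huniq : ∀ ν : Measure X, IsProbabilityMeasure ν → MeasurePreserving f ν ν → ν = μ)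
    (hp : 0 < p) : ¬IsPeriodicPt f p x := fun hx =>
  let ⟨ν, hν, hνf, hνx⟩ := hx.exists_isProbabilityMeasure_measurePreserving hf hp
  hνx (huniq ν hν hνf ▸ measure_singleton x)

end PeriodicOrbit

section NoReturn

variable {X : Type*} {f : X → X} {n : ℕ} {s t : Set X}

def NoReturnUpTo (f : X → X) (n : ℕ) (s : Set X) : Prop :=
  ∀ i ∈ Icc 1 n, Disjoint s (f^[i] ⁻¹' s)

theorem NoReturnUpTo.mono (h : NoReturnUpTo f n s) (hts : t ⊆ s) : NoReturnUpTo f n t :=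
  fun i hi => (h i hi).mono hts (preimage_mono hts)

theorem NoReturnUpTo.disjoint_preimage_iterate (h : NoReturnUpTo f n s) {i j : ℕ} (hij : i < j)
    (hj : j ≤ n) : Disjoint (f^[i] ⁻¹' s) (f^[j] ⁻¹' s) := by
  refine disjoint_left.2 fun x hi hj' => disjoint_left.1 (h (j - i) ⟨by omega, by omega⟩) hi ?_
  rwa [mem_preimage, ← iterate_add_apply, Nat.sub_add_cancel hij.le]

theorem NoReturnUpTo.mul_measureReal_le [MeasurableSpace X] {μ : Measure X} [IsFiniteMeasure μ]
    (hf : MeasurePreserving f μ μ) (hs : MeasurableSet s) (h : NoReturnUpTo f n s) :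
    (n + 1) * μ.real s ≤ μ.real univ := by
  have hdisj : (Finset.range (n + 1) : Set ℕ).PairwiseDisjoint (fun i => f^[i] ⁻¹' s) := by
    intro i hi j hj hne
    simp only [Finset.coe_range, mem_Iio] at hi hj
    rcases hne.lt_or_gt with hij | hji
    · exact h.disjoint_preimage_iterate hij (by omega)
    · exact (h.disjoint_preimage_iterate hji (by omega)).symm
  calc (n + 1) * μ.real s = ∑ i ∈ Finset.range (n + 1), μ.real (f^[i] ⁻¹' s) := by
        simp [(hf.iterate _).measureReal_preimage hs.nullMeasurableSet]
    _ = μ.real (⋃ i ∈ Finset.range (n + 1), f^[i] ⁻¹' s) :=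
        (measureReal_biUnion_finset hdisj fun i _ => hf.measurable.iterate i hs).symm
    _ ≤ μ.real univ := measureReal_mono (subset_univ _)

theorem eventually_smallSets_disjoint_preimage [TopologicalSpace X] [T2Space X] {x : X}
    (hf : ContinuousAt f x) (hx : f x ≠ x) :
    ∀ᶠ V in (𝓝 x).smallSets, Disjoint V (f ⁻¹' V) := by
  obtain ⟨u, v, hu, hv, huv⟩ := t2_separation_nhds hx.symm
  rw [eventually_smallSets' fun V W hVW hW => hW.mono hVW (preimage_mono hVW)]
  exact ⟨u ∩ f ⁻¹' v, inter_mem hu (hf hv), disjoint_left.2 fun y hy hfy =>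
    disjoint_left.1 huv hfy.1 hy.2⟩

theorem exists_isClopen_mem_noReturnUpTo [TopologicalSpace X] [T2Space X] [CompactSpace X]
    [TotallyDisconnectedSpace X] (hf : Continuous f) {x : X}
    (hx : ∀ i ∈ Icc 1 n, f^[i] x ≠ x) : ∃ V, IsClopen V ∧ x ∈ V ∧ NoReturnUpTo f n V := by
  have : ∀ᶠ V in (𝓝 x).smallSets, NoReturnUpTo f n V :=
    (eventually_all_finite (finite_Icc 1 n)).2 fun i hi =>
      eventually_smallSets_disjoint_preimage (hf.iterate i).continuousAt (hx i hi)
  obtain ⟨V, ⟨hxV, hV⟩, hVret⟩ := ((nhds_basis_clopen x).smallSets.eventually_iff).1 this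
  exact ⟨V, hV, hxV, hVret (mem_powerset subset_rfl)⟩

end NoReturn

namespace Homeomorph

variable {X : Type*} [TopologicalSpace X] (T : X ≃ₜ X) (n : ℕ) {s t : Set X}

def saturationUpTo (s : Set X) : Set X :=
  ⋃ i ∈ Finset.range (n + 1), (T^[i] ⁻¹' s ∪ T.symm^[i] ⁻¹' s)

variable {T n}

theorem mem_saturationUpTo {x : X} :
    x ∈ T.saturationUpTo n s ↔ ∃ i ≤ n, T^[i] x ∈ s ∨ T.symm^[i] x ∈ s := by
  simp [saturationUpTo]

theorem subset_saturationUpTo : s ⊆ T.saturationUpTo n s :=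
  fun _ hx => mem_saturationUpTo.2 ⟨0, n.zero_le, Or.inl hx⟩

theorem saturationUpTo_mono (hst : s ⊆ t) : T.saturationUpTo n s ⊆ T.saturationUpTo n t :=
  biUnion_mono subset_rfl fun _ _ => union_subset_union (preimage_mono hst) (preimage_mono hst)

theorem _root_.IsClopen.saturationUpTo (hs : IsClopen s) : IsClopen (T.saturationUpTo n s) :=
  isClopen_biUnion_finset fun i _ =>
    (hs.preimage (T.continuous.iterate i)).union (hs.preimage (T.symm.continuous.iterate i))

theorem _root_.NoReturnUpTo.union_diff_saturationUpTo {F V : Set X} (hF : NoReturnUpTo T n F)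
    (hV : NoReturnUpTo T n V) : NoReturnUpTo T n (F ∪ (V \ T.saturationUpTo n F)) := by
  intro i hi
  have hin : i ≤ n := hi.2
  have hFV : Disjoint F (T^[i] ⁻¹' (V \ T.saturationUpTo n F)) :=
    disjoint_left.2 fun y hy hTy => hTy.2 <| mem_saturationUpTo.2
      ⟨i, hin, Or.inr (by rwa [(LeftInverse.iterate T.symm_apply_apply i) y])⟩
  have hVF : Disjoint (V \ T.saturationUpTo n F) (T^[i] ⁻¹' F) :=
    disjoint_left.2 fun y hy hTy => hy.2 (mem_saturationUpTo.2 ⟨i, hin, Or.inl hTy⟩)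
  rw [preimage_union, disjoint_union_left, disjoint_union_right, disjoint_union_right]
  exact ⟨⟨hF i hi, hFV⟩, hVF, hV.mono sdiff_subset i hi⟩

theorem exists_isClopen_noReturnUpTo_subset_saturationUpTo (𝒱 : Finset (Set X))
    (h𝒱 : ∀ V ∈ 𝒱, IsClopen V ∧ NoReturnUpTo T n V) :
    ∃ F, IsClopen F ∧ NoReturnUpTo T n F ∧ ∀ V ∈ 𝒱, V ⊆ T.saturationUpTo n F := by
  classical
  induction 𝒱 using Finset.induction_on with
  | empty => exact ⟨∅, isClopen_empty, fun _ _ => empty_disjoint _, by simp⟩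
  | insert V 𝒱 _ ih =>
    obtain ⟨F, hFc, hF, hF𝒱⟩ := ih fun W hW => h𝒱 W (Finset.mem_insert_of_mem hW)
    obtain ⟨hVc, hV⟩ := h𝒱 V (Finset.mem_insert_self V 𝒱)
    have hFF' : F ⊆ F ∪ (V \ T.saturationUpTo n F) := subset_union_left
    refine ⟨_, hFc.union (hVc.diff hFc.saturationUpTo), hF.union_diff_saturationUpTo hV, ?_⟩
    simp only [Finset.mem_insert, forall_eq_or_imp]
    refine ⟨fun x hx => ?_, fun W hW => (hF𝒱 W hW).trans (saturationUpTo_mono hFF')⟩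
    by_cases hxF : x ∈ T.saturationUpTo n F
    · exact saturationUpTo_mono hFF' hxF
    · exact subset_saturationUpTo (Or.inr ⟨hx, hxF⟩)

theorem exists_isClopen_noReturnUpTo_saturationUpTo_eq_univ [T2Space X] [CompactSpace X]
    [TotallyDisconnectedSpace X] (hT : ∀ x, ∀ i ∈ Icc 1 n, T^[i] x ≠ x) :
    ∃ F, IsClopen F ∧ NoReturnUpTo T n F ∧ T.saturationUpTo n F = univ := by
  classical
  choose V hVc hxV hV using fun x => exists_isClopen_mem_noReturnUpTo T.continuous (hT x)
  obtain ⟨c, hc⟩ := CompactSpace.elim_nhds_subcover V fun x => (hVc x).isOpen.mem_nhds (hxV x)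
  obtain ⟨F, hFc, hF, hcF⟩ := exists_isClopen_noReturnUpTo_subset_saturationUpTo (c.image V)
    (by simpa using fun x _ => ⟨hVc x, hV x⟩)
  refine ⟨F, hFc, hF, eq_univ_of_forall fun y => ?_⟩
  obtain ⟨x, hx, hyx⟩ := mem_iUnion₂.1 (hc.symm ▸ mem_univ y : y ∈ ⋃ x ∈ c, V x)
  exact hcF _ (Finset.mem_image_of_mem V hx) hyx

theorem exists_iterate_mem_of_saturationUpTo_eq_univ (h : T.saturationUpTo n s = univ) (x : X) :
    ∃ t, T^[t] x ∈ s := by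
  obtain ⟨i, hin, hi | hi⟩ := mem_saturationUpTo.1 (h.symm ▸ mem_univ (T^[n] x))
  · exact ⟨i + n, by rwa [iterate_add_apply]⟩
  · refine ⟨n - i, ?_⟩
    rwa [← Nat.add_sub_cancel' hin, iterate_add_apply,
      (LeftInverse.iterate T.symm_apply_apply i)] at hi

end Homeomorph

section HitTime

variable {X : Type*} {f : X → X} {F : Set X} (h : ∀ x, ∃ t, f^[t] x ∈ F) {x : X}

open scoped Classical in
noncomputable def hitTime (x : X) : ℕ := Nat.find (h x)

theorem hitTime_eq_zero_iff : hitTime h x = 0 ↔ x ∈ F := by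
  simp [hitTime]

open scoped Classical in
theorem hitTime_apply_add_one (hx : x ∉ F) : hitTime h (f x) + 1 = hitTime h x :=
  (Nat.find_comp_succ (h x) (h (f x)) hx).symm

theorem continuous_hitTime [TopologicalSpace X] (hf : Continuous f) (hF : IsClopen F) :
    Continuous (hitTime h) := by
  refine continuous_discrete_rng.2 fun t => ?_
  have : hitTime h ⁻¹' {t} = f^[t] ⁻¹' F ∩ ⋂ u ∈ Finset.range t, (f^[u] ⁻¹' F)ᶜ := by
    ext x
    simp [hitTime, Nat.find_eq_iff]
  rw [this]
  exact (hF.isOpen.preimage (hf.iterate t)).inter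
    (isOpen_biInter_finset fun u _ => (hF.isClosed.preimage (hf.iterate u)).isOpen_compl)

theorem not_odd_hitTime_apply (hx : Odd (hitTime h x)) : ¬Odd (hitTime h (f x)) := by
  have hxF : x ∉ F := fun hxF => by simp [(hitTime_eq_zero_iff h).2 hxF] at hx
  rwa [← hitTime_apply_add_one h hxF, Nat.odd_add_one] at hx

theorem preimage_setOf_not_odd_hitTime_subset :
    f ⁻¹' {x | ¬Odd (hitTime h x)} ⊆ {x | Odd (hitTime h x)} ∪ F := by
  intro x hx
  by_cases hxF : x ∈ F
  · exact Or.inr hxF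
  · left
    show Odd (hitTime h x)
    rwa [← hitTime_apply_add_one h hxF, Nat.odd_add_one]

end HitTime

theorem one_sub_measureReal_le_two_mul {X : Type*} [MeasurableSpace X] {μ : Measure X}
    [IsProbabilityMeasure μ] {f : X → X} (hf : MeasurePreserving f μ μ) {D F : Set X}
    (hD : MeasurableSet D) (hDF : f ⁻¹' Dᶜ ⊆ D ∪ F) : 1 - μ.real F ≤ 2 * μ.real D := by
  have : μ.real Dᶜ ≤ μ.real D + μ.real F := calc
    μ.real Dᶜ = μ.real (f ⁻¹' Dᶜ) := (hf.measureReal_preimage hD.compl.nullMeasurableSet).symm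
    _ ≤ μ.real (D ∪ F) := measureReal_mono hDF
    _ ≤ μ.real D + μ.real F := measureReal_union_le D F
  linarith [probReal_compl_eq_one_sub (μ := μ) hD]

/-- If `(X,T)` is a uniquely ergodic topological system on a totally disconnected
compact metric space whose unique invariant Borel probability measure `μ` is atomless,
then for every `ε > 0` there is a clopen set `D` with `μ(D) > 1/2 - ε` and
`D ∩ TD = ∅`. -/
theorem statement11 (X : Type) [MetricSpace X] [CompactSpace X]
    [TotallyDisconnectedSpace X] [MeasurableSpace X] [BorelSpace X]
    (T : X ≃ₜ X) (μ : Measure X) (hprob : IsProbabilityMeasure μ)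
    (hinv : MeasurePreserving T μ μ)
    (huniq : ∀ ν : Measure X, IsProbabilityMeasure ν → MeasurePreserving T ν ν → ν = μ)
    (hcont : ∀ x : X, μ {x} = 0)
    (ε : ℝ) (hε : 0 < ε) :
    ∃ D : Set X, IsClopen D ∧ 1 / 2 - ε < (μ D).toReal ∧ D ∩ T '' D = ∅ := by
  have : NullSingletonClass μ := ⟨hcont⟩
  obtain ⟨n, hn⟩ := exists_nat_one_div_lt (by positivity : (0 : ℝ) < 2 * ε)
  obtain ⟨F, hFc, hF, hsat⟩ := T.exists_isClopen_noReturnUpTo_saturationUpTo_eq_univ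
    (n := n) fun _ _ hi =>
      not_isPeriodicPt_of_forall_measurePreserving_eq T.continuous.measurable huniq hi.1
  have hhit := T.exists_iterate_mem_of_saturationUpTo_eq_univ hsat
  set D := {x | Odd (hitTime hhit x)}
  have hDc : IsClopen D :=
    (isClopen_discrete {k : ℕ | Odd k}).preimage (continuous_hitTime hhit T.continuous hFc)
  refine ⟨D, hDc, ?_, eq_empty_iff_forall_notMem.2 fun _ ⟨hz, _, hy, hyz⟩ =>
    not_odd_hitTime_apply hhit hy (hyz ▸ hz)⟩
  have hD := one_sub_measureReal_le_two_mul hinv hDc.isOpen.measurableSet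
    (preimage_setOf_not_odd_hitTime_subset hhit)
  have hμF : (n + 1) * μ.real F ≤ 1 := by
    simpa using hF.mul_measureReal_le hinv hFc.isOpen.measurableSet
  have : μ.real F < 2 * ε := (le_div_iff₀' (by positivity)).2 hμF |>.trans_lt hn
  rw [← measureReal_def]
  linarith
end

section
/- If S ⊆ ℤ is such that every translate S + m (m ∈ ℤ) is a set of recurrence, then S is dense in the Bohr topology on ℤ. -/
noncomputable section

open MeasureTheory Set Filter

/-- The Bohr topology on `ℤ`: the weakest topology making every group homomorphism
`ℤ → ℝ/ℤ` continuous. -/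
def bohrTopology : TopologicalSpace ℤ :=
  ⨅ χ : ℤ →+ AddCircle (1 : ℝ), TopologicalSpace.induced χ inferInstance

open Topology

/-! A Bohr neighbourhood of `m` contains every `s` for which `(χ (s - m))_χ` is close to `0`
for a finite family of characters `χ : ℤ → ℝ/ℤ`. The rotation by `α = (χ 1)_χ` of the finite
torus preserves Haar measure, so recurrence of `S - m` for a small neighbourhood of `0` yields
`s ∈ S` with `(s - m) • α = (χ (s - m))_χ` close to `0`, that is, `s` in the neighbourhood. -/

def MPSystem.addRotation {G : Type} [MeasurableSpace G] [AddGroup G] [MeasurableAdd G]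
    (μ : Measure G) [IsProbabilityMeasure μ] [μ.IsAddLeftInvariant] (a : G) : MPSystem where
  X := G
  μ := μ
  prob := inferInstance
  T := MeasurableEquiv.addLeft a
  mp := measurePreserving_add_left μ a

section Rotation

variable {G : Type} [MeasurableSpace G] [AddGroup G] [MeasurableAdd G]

theorem MPSystem.addRotation_iter (μ : Measure G) [IsProbabilityMeasure μ]
    [μ.IsAddLeftInvariant] (a : G) (n : ℤ) (x : G) :
    (MPSystem.addRotation μ a).iter n x = n • a + x := by
  change (Equiv.addLeft a ^ n) x = _
  rw [Equiv.zsmul_addLeft, Equiv.coe_addLeft]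

/-- Take `D` open with `D - D ⊆ V`; a point `x` with `x, n • a + x ∈ D` gives `n • a ∈ V`. -/
theorem IsRecurrenceSet.exists_zsmul_mem_nhds [TopologicalSpace G] [IsTopologicalAddGroup G]
    [OpensMeasurableSpace G] (μ : Measure G) [IsProbabilityMeasure μ] [μ.IsAddLeftInvariant]
    [μ.IsOpenPosMeasure] {S : Set ℤ} (hS : IsRecurrenceSet S) (a : G) {V : Set G}
    (hV : V ∈ 𝓝 (0 : G)) : ∃ n ∈ S, n • a ∈ V := by
  obtain ⟨W, hW, hWV⟩ := exists_nhds_half_neg hV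
  set D : Set G := interior W
  have hD : 0 < μ D := isOpen_interior.measure_pos μ ⟨0, mem_interior_iff_mem_nhds.2 hW⟩
  have hDm : MeasurableSet D := isOpen_interior.measurableSet
  obtain ⟨n, hnS, hn⟩ := hS (MPSystem.addRotation μ a) D hDm hD
  obtain ⟨_, hy, (x : G), hx, rfl⟩ := nonempty_of_measure_ne_zero hn.ne'
  rw [MPSystem.addRotation_iter μ a n x] at hy
  refine ⟨n, hnS, ?_⟩
  have h := hWV _ (interior_subset hy) x (interior_subset hx)
  rwa [add_sub_cancel_right] at h

end Rotation

theorem exists_characters_of_mem_nhds_bohrTopology {m : ℤ} {U : Set ℤ}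
    (hU : U ∈ @nhds ℤ bohrTopology m) :
    ∃ (ι : Type) (_ : Finite ι) (χ : ι → ℤ →+ AddCircle (1 : ℝ)),
      ∃ V ∈ 𝓝 (0 : ι → AddCircle (1 : ℝ)), ∀ n : ℤ, (fun i => χ i n) ∈ V → n + m ∈ U := by
  rw [bohrTopology, nhds_iInf, Filter.mem_iInf] at hU
  obtain ⟨I, hI, W, hW, rfl⟩ := hU
  simp only [nhds_induced] at hW
  choose W' hW' hW'W using fun i => Filter.mem_comap.1 (hW i)
  have := hI.to_subtype
  refine ⟨I, inferInstance, (↑), Set.univ.pi fun i => (· + i.1 m) ⁻¹' W' i, ?_, ?_⟩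
  · refine set_pi_mem_nhds Set.finite_univ fun i _ => ?_
    exact (continuous_add_const _).continuousAt.preimage_mem_nhds (by simpa using hW' i)
  · intro n hn
    refine Set.mem_iInter.2 fun i => hW'W i ?_
    simpa using hn i trivial

/-- If every translate of `S ⊆ ℤ` is a set of recurrence, then `S` is dense in the
Bohr topology on `ℤ`. -/
theorem statement12 (S : Set ℤ) (hS : ∀ m : ℤ, IsRecurrenceSet (zTranslate S m)) :
    @Dense ℤ bohrTopology S := by
  let := bohrTopology
  refine fun m => mem_closure_iff_nhds.2 fun U hU => ?_
  obtain ⟨ι, _, χ, V, hV, hVU⟩ := exists_characters_of_mem_nhds_bohrTopology hU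
  have : Fintype ι := Fintype.ofFinite ι
  have : Fact ((0 : ℝ) < 1) := ⟨one_pos⟩
  obtain ⟨_, ⟨s, hs, rfl⟩, hsV⟩ := (hS (-m)).exists_zsmul_mem_nhds
    (Measure.pi fun _ => AddCircle.haarAddCircle) (fun i => χ i 1) hV
  have hχ : (fun i => χ i (s + -m)) = (s + -m) • fun i => χ i 1 := by
    funext i
    rw [Pi.smul_apply, ← map_zsmul, smul_eq_mul, mul_one]
  refine ⟨s, ?_, hs⟩
  simpa using hVU (s + -m) (hχ ▸ hsV)
end
end

section
/- Let k, r ∈ ℕ, let A ⊆ Λ_k^r be nonempty, let x ∈ Λ_k^r, and let t > 0. If (A⁻¹A) ∩ U_t(x) = ∅, then |A|/|Λ_k^r| ≤ exp(−t²/(4r)). -/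
noncomputable section

open Set Filter

/-- `Λ_k^r`: the set of `r`-tuples of `k`-th roots of unity in `ℂ`. -/
def rootsPow (k r : ℕ) : Set (Fin r → ℂ) := {x | ∀ j, x j ^ k = 1}

/-- `d(x,y) = ∑_j (1/2)|x_j - y_j|`. -/
noncomputable def hamDist {r : ℕ} (x y : Fin r → ℂ) : ℝ :=
  ∑ j, (1 / 2 : ℝ) * ‖x j - y j‖

/-- The Hamming ball `U_t(x) = {y ∈ Λ_k^r : d(x,y) ≤ t}`. -/
def hammingBall (k r : ℕ) (t : ℝ) (x : Fin r → ℂ) : Set (Fin r → ℂ) :=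
  {y ∈ rootsPow k r | hamDist x y ≤ t}

/-- The set `A⁻¹A = {a⁻¹ b : a, b ∈ A}` (coordinatewise operations). -/
def invMulSet {r : ℕ} (A : Set (Fin r → ℂ)) : Set (Fin r → ℂ) :=
  {z | ∃ a ∈ A, ∃ b ∈ A, z = fun j => (a j)⁻¹ * b j}

/-!
Identify `Λ_k^r` with the product `μ_k^r` of a `k`-element group. The translate `A x` is at
Hamming distance more than `t` from `A`: since `|a_j| = 1`, `d(x, a⁻¹ b) = d(a x, b)`, which is at
most the number of coordinates where `a x` and `b` differ.

Two sets `B, C ⊆ μ^r` at Hamming distance at least `t` satisfy `|B| |C| ≤ |μ|^{2r} e^{-t²/2r}`.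
This is the bounded differences inequality: for `f` that is `c`-Lipschitz in the Hamming metric,
`(∑ e^f) (∑ e^{-f}) ≤ |μ|^{2r} e^{r c²/2}`, proved one coordinate at a time from
`cosh c ≤ e^{c²/2}`; apply it to `f = c · dist(·, B)` with `c = t / r`. With `B = A x`, `C = A`
this gives `|A|² ≤ k^{2r} e^{-t²/2r}`.
-/

open Finset

section HammingConcentration

variable {α : Type*}

lemma hammingDist_fin_cons [DecidableEq α] {n : ℕ} (s u : α) (y z : Fin n → α) :
    hammingDist (Fin.cons s y : Fin (n + 1) → α) (Fin.cons u z) =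
      (if s = u then 0 else 1) + hammingDist y z := by
  simp only [hammingDist, card_filter, Fin.sum_univ_succ, Fin.cons_zero, Fin.cons_succ, ite_not]

lemma sum_fin_succ_pi [Fintype α] {M : Type*} [AddCommMonoid M] {n : ℕ}
    (F : (Fin (n + 1) → α) → M) :
    ∑ y, F y = ∑ y : Fin n → α, ∑ s, F (Fin.cons s y) := by
  rw [← (Fin.consEquiv fun _ => α).sum_comp, Fintype.sum_prod_type, sum_comm]
  rfl

lemma div_add_div_le_two_mul_exp {p q c : ℝ} (hp : 0 < p) (hq : 0 < q)
    (hpq : p ≤ Real.exp c * q) (hqp : q ≤ Real.exp c * p) :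
    p / q + q / p ≤ 2 * Real.exp (c ^ 2 / 2) := by
  have hE := Real.exp_pos c
  -- `(e^c q - p)(e^c p - q) ≥ 0` is `p² + q² ≤ (e^c + e^{-c}) p q`
  have hcosh : p / q + q / p ≤ 2 * Real.cosh c := by
    rw [Real.cosh_eq, Real.exp_neg, div_add_div _ _ hq.ne' hp.ne', div_le_iff₀ (by positivity)]
    have := mul_nonneg (sub_nonneg.2 hpq) (sub_nonneg.2 hqp)
    field_simp
    nlinarith
  linarith [Real.cosh_le_exp_half_sq c]

lemma sum_mul_sum_inv_le [Fintype α] (a : α → ℝ) (ha : ∀ i, 0 < a i) {c : ℝ}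
    (hc : ∀ i j, a i ≤ Real.exp c * a j) :
    (∑ i, a i) * ∑ i, (a i)⁻¹ ≤ (Fintype.card α : ℝ) ^ 2 * Real.exp (c ^ 2 / 2) := by
  have hsymm : 2 * ((∑ i, a i) * ∑ i, (a i)⁻¹) = ∑ i, ∑ j, (a i / a j + a j / a i) := by
    simp only [sum_mul_sum, sum_add_distrib, div_eq_mul_inv]
    rw [sum_comm (f := fun i j => a j * (a i)⁻¹)]
    ring
  have hpair : ∑ i, ∑ j, (a i / a j + a j / a i) ≤ ∑ _i : α, ∑ _j : α, 2 * Real.exp (c ^ 2 / 2) :=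
    sum_le_sum fun i _ => sum_le_sum fun j _ =>
      div_add_div_le_two_mul_exp (ha i) (ha j) (hc i j) (hc j i)
  simp only [sum_const, card_univ, nsmul_eq_mul] at hpair
  nlinarith

theorem sum_mul_sum_inv_le_of_le_exp_hammingDist [Fintype α] [DecidableEq α] [Nonempty α]
    {c : ℝ} (hc : 0 ≤ c) (n : ℕ) (F : (Fin n → α) → ℝ) (hF : ∀ y, 0 < F y)
    (hLip : ∀ y z, F y ≤ Real.exp (c * hammingDist y z) * F z) :
    (∑ y, F y) * ∑ y, (F y)⁻¹ ≤
      (Fintype.card α : ℝ) ^ (2 * n) * Real.exp (n * c ^ 2 / 2) := by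
  induction n with
  | zero => simp [mul_inv_cancel₀ (hF _).ne']
  | succ n ih =>
    set K : ℝ := (Fintype.card α : ℝ)
    let P : (Fin n → α) → ℝ := fun y => ∑ s, F (Fin.cons s y)
    have hP : ∀ y, 0 < P y := fun y => sum_pos (fun s _ => hF _) univ_nonempty
    have hPLip : ∀ y z, P y ≤ Real.exp (c * hammingDist y z) * P z := fun y z => by
      show ∑ s, F (Fin.cons s y) ≤ _ * ∑ s, F (Fin.cons s z)
      rw [mul_sum]
      gcongr with s
      simpa [hammingDist_fin_cons] using hLip (Fin.cons s y) (Fin.cons s z)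
    have hfiber : ∀ y, ∑ s, (F (Fin.cons s y))⁻¹ ≤ K ^ 2 * Real.exp (c ^ 2 / 2) * (P y)⁻¹ := by
      intro y
      rw [le_mul_inv_iff₀ (hP y), mul_comm]
      refine sum_mul_sum_inv_le _ (fun s => hF _) fun s u => (hLip _ (Fin.cons u y)).trans ?_
      refine mul_le_mul_of_nonneg_right
        (Real.exp_le_exp.2 (mul_le_of_le_one_right hc ?_)) (hF _).le
      rw [hammingDist_fin_cons, hammingDist_self]
      split_ifs <;> simp
    calc (∑ y, F y) * ∑ y, (F y)⁻¹
        = (∑ y, P y) * ∑ y, ∑ s, (F (Fin.cons s y))⁻¹ := by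
          rw [sum_fin_succ_pi F, sum_fin_succ_pi fun y => (F y)⁻¹]
      _ ≤ (∑ y, P y) * ∑ y, K ^ 2 * Real.exp (c ^ 2 / 2) * (P y)⁻¹ := by
          gcongr with y
          · exact sum_nonneg fun y _ => (hP y).le
          · exact hfiber y
      _ = K ^ 2 * Real.exp (c ^ 2 / 2) * ((∑ y, P y) * ∑ y, (P y)⁻¹) := by
          rw [← mul_sum]; ring
      _ ≤ K ^ 2 * Real.exp (c ^ 2 / 2) * (K ^ (2 * n) * Real.exp (n * c ^ 2 / 2)) := by
          exact mul_le_mul_of_nonneg_left (ih P hP hPLip) (by positivity)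
      _ = K ^ (2 * (n + 1)) * Real.exp ((n + 1 : ℕ) * c ^ 2 / 2) := by
          rw [mul_mul_mul_comm, ← pow_add, ← Real.exp_add]
          push_cast
          ring_nf

theorem card_mul_card_le_of_le_hammingDist [Fintype α] [DecidableEq α] [Nonempty α] {n : ℕ}
    (B C : Finset (Fin n → α)) {t : ℝ} (ht : 0 ≤ t)
    (hsep : ∀ b ∈ B, ∀ y ∈ C, t ≤ hammingDist b y) :
    (#B : ℝ) * #C ≤ (Fintype.card α : ℝ) ^ (2 * n) * Real.exp (-t ^ 2 / (2 * n)) := by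
  rcases B.eq_empty_or_nonempty with rfl | hB
  · simp only [Finset.card_empty, Nat.cast_zero, zero_mul]
    positivity
  let dB : (Fin n → α) → ℕ := fun y => B.inf' hB fun b => hammingDist b y
  have hdB_le : ∀ y z, dB y ≤ hammingDist y z + dB z := fun y z => by
    obtain ⟨b, hb, hbz⟩ := exists_mem_eq_inf' hB fun b => hammingDist b z
    calc dB y ≤ hammingDist b y := inf'_le _ hb
      _ ≤ hammingDist b z + hammingDist z y := hammingDist_triangle _ _ _
      _ = hammingDist y z + dB z := by rw [← hbz, hammingDist_comm, add_comm]
  set c : ℝ := t / n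
  have hc : 0 ≤ c := by positivity
  let F : (Fin n → α) → ℝ := fun y => Real.exp (c * dB y)
  have hsumF : #C * Real.exp (c * t) ≤ ∑ y, F y := by
    rw [← nsmul_eq_mul]
    refine (card_nsmul_le_sum C F _ fun y hy => ?_).trans
      (sum_le_univ_sum_of_nonneg fun y => (Real.exp_pos _).le)
    show Real.exp (c * t) ≤ Real.exp (c * dB y)
    gcongr
    exact_mod_cast le_inf' hB _ fun b hb => hsep b hb y hy
  have hsumFinv : (#B : ℝ) ≤ ∑ y, (F y)⁻¹ := by
    rw [← nsmul_one]
    refine (card_nsmul_le_sum B _ _ fun b hb => ?_).trans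
      (sum_le_univ_sum_of_nonneg fun y => (inv_pos.2 (Real.exp_pos _)).le)
    have : dB b = 0 := Nat.eq_zero_of_le_zero <| (inf'_le _ hb).trans (hammingDist_self b).le
    simp [F, this]
  have hmgf := sum_mul_sum_inv_le_of_le_exp_hammingDist hc n F (fun y => Real.exp_pos _)
    fun y z => by
      show Real.exp (c * dB y) ≤ Real.exp (c * hammingDist y z) * Real.exp (c * dB z)
      rw [← Real.exp_add]
      gcongr
      rw [← mul_add]
      gcongr
      exact_mod_cast hdB_le y z
  -- with `c = t / n`, `n c² / 2 - c t = -t² / (2n)` (also for `n = 0`, where `c = 0`)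
  have hexponent : (n : ℝ) * c ^ 2 / 2 = c * t + -t ^ 2 / (2 * n) := by
    rcases eq_or_ne (n : ℝ) 0 with hn | hn
    · simp [c, hn]
    · simp only [c]
      field_simp
      ring
  rw [hexponent, Real.exp_add, ← mul_assoc, mul_right_comm] at hmgf
  refine le_of_mul_le_mul_right ?_ (Real.exp_pos (c * t))
  calc (#B : ℝ) * #C * Real.exp (c * t) = #B * (#C * Real.exp (c * t)) := mul_assoc _ _ _
    _ ≤ (∑ y, (F y)⁻¹) * ∑ y, F y := by gcongr
    _ ≤ _ := by rw [mul_comm]; exact hmgf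

end HammingConcentration

lemma hamDist_mul_left {r : ℕ} {w : Fin r → ℂ} (hw : ∀ j, ‖w j‖ = 1) (u v : Fin r → ℂ) :
    hamDist (w * u) (w * v) = hamDist u v := by
  simp only [hamDist, Pi.mul_apply, ← mul_sub, norm_mul, hw, one_mul]

open Classical in
lemma hamDist_le_hammingDist {r : ℕ} {u v : Fin r → ℂ} (hu : ∀ j, ‖u j‖ ≤ 1)
    (hv : ∀ j, ‖v j‖ ≤ 1) : hamDist u v ≤ hammingDist u v := by
  rw [hamDist, hammingDist, card_filter, Nat.cast_sum]
  refine sum_le_sum fun j _ => ?_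
  split_ifs with h
  · have := norm_sub_le (u j) (v j)
    push_cast
    linarith [hu j, hv j]
  · simp [not_not.1 h]

section RootsOfUnity

variable (k r : ℕ)

def coeRootsOfUnity : (Fin r → rootsOfUnity k ℂ) →* (Fin r → ℂ) :=
  ((Units.coeHom ℂ).comp (rootsOfUnity k ℂ).subtype).compLeft (Fin r)

variable {k r}

lemma coeRootsOfUnity_apply (a : Fin r → rootsOfUnity k ℂ) (j : Fin r) :
    coeRootsOfUnity k r a j = ((a j : ℂˣ) : ℂ) := rfl

lemma coeRootsOfUnity_injective : Function.Injective (coeRootsOfUnity k r) :=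
  fun _ _ h => funext fun j => Subtype.ext <| Units.ext <| congrFun h j

lemma range_coeRootsOfUnity [NeZero k] : Set.range (coeRootsOfUnity k r) = rootsPow k r := by
  ext x
  refine ⟨?_, fun hx => ⟨fun j => rootsOfUnity.mkOfPowEq (x j) (hx j), ?_⟩⟩
  · rintro ⟨a, rfl⟩ j
    rw [coeRootsOfUnity_apply, ← Units.val_pow_eq_pow_val, (mem_rootsOfUnity _ _).1 (a j).2,
      Units.val_one]
  · funext j
    exact rootsOfUnity.val_mkOfPowEq_coe (x j) (hx j)

lemma norm_coeRootsOfUnity_apply [NeZero k] (a : Fin r → rootsOfUnity k ℂ) (j : Fin r) :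
    ‖coeRootsOfUnity k r a j‖ = 1 :=
  Complex.norm_eq_one_of_mem_rootsOfUnity (a j).2

lemma nat_card_rootsPow [NeZero k] : Nat.card (rootsPow k r) = k ^ r := by
  rw [← range_coeRootsOfUnity, Nat.card_range_of_injective coeRootsOfUnity_injective, Nat.card_fun,
    Complex.card_rootsOfUnity, Nat.card_fin]

open Classical in
lemma hammingDist_coeRootsOfUnity (a b : Fin r → rootsOfUnity k ℂ) :
    hammingDist (coeRootsOfUnity k r a) (coeRootsOfUnity k r b) = hammingDist a b :=
  hammingDist_comp (fun _ (ζ : rootsOfUnity k ℂ) => ((ζ : ℂˣ) : ℂ))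
    fun _ => Units.val_injective.comp Subtype.val_injective

open Classical in
lemma lt_hammingDist_of_notMem_hammingBall [NeZero k] {t : ℝ} (x a b : Fin r → rootsOfUnity k ℂ)
    (h : (fun j => (coeRootsOfUnity k r a j)⁻¹ * coeRootsOfUnity k r b j) ∉
      hammingBall k r t (coeRootsOfUnity k r x)) :
    t < hammingDist (a * x) b := by
  set e := coeRootsOfUnity k r
  have hab : (fun j => (e a j)⁻¹ * e b j) = e (a⁻¹ * b) := by
    funext j
    simp [e, coeRootsOfUnity_apply]
  rw [hab, hammingBall, Set.mem_ofPred_eq, ← range_coeRootsOfUnity, not_and, not_le] at h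
  calc t < hamDist (e x) (e (a⁻¹ * b)) := h (Set.mem_range_self _)
    _ = hamDist (e (a * x)) (e b) := by
      rw [← hamDist_mul_left (norm_coeRootsOfUnity_apply a), ← map_mul, ← map_mul,
        mul_inv_cancel_left]
    _ ≤ hammingDist (e (a * x)) (e b) :=
      hamDist_le_hammingDist (fun j => (norm_coeRootsOfUnity_apply _ j).le)
        (fun j => (norm_coeRootsOfUnity_apply _ j).le)
    _ = hammingDist (a * x) b := by rw [hammingDist_coeRootsOfUnity]

end RootsOfUnity

theorem statement15_general (k r : ℕ) (hk : 0 < k)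
    (A : Set (Fin r → ℂ)) (hA : A ⊆ rootsPow k r)
    (x : Fin r → ℂ) (hx : x ∈ rootsPow k r) (t : ℝ) (ht : 0 < t)
    (hdisj : invMulSet A ∩ hammingBall k r t x = ∅) :
    (Nat.card A : ℝ) / Nat.card (rootsPow k r) ≤ Real.exp (-t ^ 2 / (4 * r)) := by
  classical
  have : NeZero k := ⟨hk.ne'⟩
  have := Fintype.ofFinite (rootsOfUnity k ℂ)
  set e := coeRootsOfUnity k r
  rw [← range_coeRootsOfUnity] at hA hx
  obtain ⟨x, rfl⟩ := hx
  set A' := (e ⁻¹' A).toFinset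
  have hcard : Nat.card A = #A' := by
    rw [← Set.ncard_eq_toFinset_card', Set.ncard_preimage_of_injective_subset_range
      coeRootsOfUnity_injective hA, Nat.card_coe_set_eq]
  have hsep : ∀ a ∈ A'.image (· * x), ∀ b ∈ A', t ≤ hammingDist a b := by
    simp only [A', Finset.mem_image, Set.mem_toFinset, Set.mem_preimage]
    rintro _ ⟨a, ha, rfl⟩ b hb
    refine (lt_hammingDist_of_notMem_hammingBall x a b fun hab => ?_).le
    exact Set.eq_empty_iff_forall_notMem.1 hdisj _ ⟨⟨_, ha, _, hb, rfl⟩, hab⟩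
  have key := card_mul_card_le_of_le_hammingDist _ _ ht.le hsep
  rw [Finset.card_image_of_injective _ (mul_left_injective x), Fintype.card_eq_nat_card,
    Complex.card_rootsOfUnity] at key
  rw [hcard, nat_card_rootsPow, div_le_iff₀ (by positivity),
    ← pow_le_pow_iff_left₀ (by positivity) (by positivity) two_ne_zero]
  calc (#A' : ℝ) ^ 2 = #A' * #A' := sq _
    _ ≤ (k : ℝ) ^ (2 * r) * Real.exp (-t ^ 2 / (2 * r)) := key
    _ = _ := by
      rw [mul_pow, ← Real.exp_nat_mul]
      push_cast
      ring_nf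

/-- If `A ⊆ Λ_k^r` is nonempty, `x ∈ Λ_k^r`, `t > 0`, and `(A⁻¹A) ∩ U_t(x) = ∅`, then
`|A|/|Λ_k^r| ≤ exp(-t²/(4r))`. -/
theorem statement15 (k r : ℕ) (hk : 0 < k)
    (A : Set (Fin r → ℂ)) (hA : A ⊆ rootsPow k r) (hne : A.Nonempty)
    (x : Fin r → ℂ) (hx : x ∈ rootsPow k r) (t : ℝ) (ht : 0 < t)
    (hdisj : invMulSet A ∩ hammingBall k r t x = ∅) :
    (Nat.card A : ℝ) / Nat.card (rootsPow k r) ≤ Real.exp (-t ^ 2 / (4 * r)) :=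
  statement15_general k r hk A hA x hx t ht hdisj
end
end

section
/- For all ε, δ > 0 and all k ∈ ℕ, there exists N = N(δ,ε,k) such that: if r > N and A ⊆ Λ_k^r has |A| ≥ δ|Λ_k^r|, then for all x ∈ Λ_k^r there exist a₁, a₂ ∈ A such that a₁⁻¹a₂ ∈ U_{r·ε}(x). -/
noncomputable section

open Set Filter

/-! Write `d(x, A)` for the Hamming distance from `x ∈ αʳ` to `A`. By induction on `r`,
`(∑ₓ exp (l · d(x, A))) · |A| ≤ |α|^(2r) · exp (l² r)`: on the slice `x₀ = c`, the distance to `A`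
is at most the distance to the slice `A_c` of `A`, and at most one more than the distance to the
projection of `A`; whichever bound is better wins, by `cosh l ≤ exp (l² / 2)`. Therefore two sets
of density `δ` have an average of `exp (l (d(x, A) + d(x, B)))` at most `exp (4 l² r) / δ`, so
some `a ∈ A` and `b ∈ B` are `O(√(r log (1/δ)))` apart. Applied to `A` and its translate `A x` in
the group `(μ_k)ʳ`, this makes `a₁⁻¹ a₂` close to `x`, and `hamDist` is at most the Hamming
distance. -/

open Finset Real

theorem exp_le_exp_sq_mul_two_sub_exp_neg {l : ℝ} (hl : 0 ≤ l) :
    exp l ≤ exp (l ^ 2) * (2 - exp (-l)) := by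
  -- `exp l + exp (-l) ≤ 2 exp (l² / 2) ≤ exp (l²) + 1`, and `(exp (l²) - 1) (1 - exp (-l)) ≥ 0`
  have hcosh : exp l + exp (-l) ≤ 2 * exp (l ^ 2 / 2) := by
    have := cosh_le_exp_half_sq l
    rw [cosh_eq] at this
    linarith
  have hsq : exp (l ^ 2) = exp (l ^ 2 / 2) ^ 2 := by rw [← exp_nat_mul]; ring_nf
  have h1 : 1 ≤ exp (l ^ 2) := one_le_exp (sq_nonneg l)
  have h2 : exp (-l) ≤ 1 := exp_le_one_iff.2 (neg_nonpos.2 hl)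
  nlinarith [sq_nonneg (exp (l ^ 2 / 2) - 1), mul_nonneg (sub_nonneg.2 h1) (sub_nonneg.2 h2)]

/-- Here `s` is the sum over a slice of size `m`, and `M` is the size of the projection. -/
theorem mul_sq_le_exp_sq_mul_of_mul_le {l s m M K : ℝ} (hl : 0 ≤ l) (hs : 0 ≤ s) (hK : 0 ≤ K)
    (hm : 0 ≤ m) (hmM : m ≤ M) (h₁ : s * m ≤ K) (h₂ : s * M ≤ exp l * K) :
    s * M ^ 2 ≤ exp (l ^ 2) * (2 * M - m) * K := by
  have key := exp_le_exp_sq_mul_two_sub_exp_neg hl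
  have hED : exp l * exp (-l) = 1 := by rw [← exp_add, add_neg_cancel, exp_zero]
  have hD : 0 < exp (-l) := exp_pos _
  have hF : 0 < exp (l ^ 2) := exp_pos _
  rcases le_or_gt M (exp l * m) with hbig | hsmall
  · have hDm : exp (-l) * M ≤ m := by nlinarith
    have hFD : 1 ≤ exp (l ^ 2) * (exp (-l) * (2 - exp (-l))) := by nlinarith
    have hmono : M ^ 2 * (exp (-l) * (2 - exp (-l))) ≤ m * (2 * M - m) := by
      nlinarith [mul_nonneg (sub_nonneg.2 hDm) (by linarith : 0 ≤ 2 * M - m - exp (-l) * M)]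
    have hM2 : M ^ 2 ≤ exp (l ^ 2) * (m * (2 * M - m)) := by
      nlinarith [mul_le_mul_of_nonneg_left hmono hF.le, sq_nonneg M]
    calc s * M ^ 2 ≤ s * (exp (l ^ 2) * (m * (2 * M - m))) := mul_le_mul_of_nonneg_left hM2 hs
      _ = exp (l ^ 2) * (2 * M - m) * (s * m) := by ring
      _ ≤ exp (l ^ 2) * (2 * M - m) * K := by gcongr; nlinarith
  · have hmD : m ≤ exp (-l) * M := by nlinarith
    have hEM : exp l * M ≤ exp (l ^ 2) * (2 * M - m) := by nlinarith
    nlinarith [mul_le_mul_of_nonneg_right hEM hK]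

theorem Fin.sum_univ_fun_succ {α M : Type*} [Fintype α] [AddCommMonoid M] {r : ℕ}
    (f : (Fin (r + 1) → α) → M) : ∑ x, f x = ∑ c, ∑ y, f (Fin.cons c y) := by
  rw [← (Fin.consEquiv fun _ => α).sum_comp, Fintype.sum_prod_type]
  rfl

section InfHammingDist

variable {ι : Type*} [Fintype ι] {β : ι → Type*} [∀ i, DecidableEq (β i)]

/-- Junk value `0` when `A` is empty. -/
def infHammingDist (x : ∀ i, β i) (A : Finset (∀ i, β i)) : ℕ :=
  sInf (hammingDist x '' A)

theorem infHammingDist_le {x a : ∀ i, β i} {A : Finset (∀ i, β i)} (ha : a ∈ A) :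
    infHammingDist x A ≤ hammingDist x a :=
  Nat.sInf_le ⟨a, ha, rfl⟩

theorem exists_hammingDist_eq_infHammingDist (x : ∀ i, β i) {A : Finset (∀ i, β i)}
    (hA : A.Nonempty) : ∃ a ∈ A, hammingDist x a = infHammingDist x A :=
  Nat.sInf_mem ((coe_nonempty.2 hA).image _)

end InfHammingDist

section Concentration

variable {α : Type*} [DecidableEq α] {r : ℕ}

theorem hammingDist_cons (a b : α) (x y : Fin r → α) :
    hammingDist (Fin.cons a x : Fin (r + 1) → α) (Fin.cons b y) =
      hammingDist x y + if a = b then 0 else 1 := by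
  simp only [hammingDist, card_filter, Fin.sum_univ_succ, Fin.cons_zero, Fin.cons_succ]
  by_cases h : a = b <;> simp [h, add_comm]

theorem infHammingDist_cons_le_image_tail {A : Finset (Fin (r + 1) → α)} (hA : A.Nonempty)
    (c : α) (y : Fin r → α) :
    infHammingDist (Fin.cons c y) A ≤ infHammingDist y (A.image Fin.tail) + 1 := by
  obtain ⟨_, hb, hyb⟩ := exists_hammingDist_eq_infHammingDist y (hA.image Fin.tail)
  obtain ⟨a, ha, rfl⟩ := mem_image.1 hb
  calc infHammingDist (Fin.cons c y) A
      ≤ hammingDist (Fin.cons c y : Fin (r + 1) → α) (Fin.cons (a 0) (Fin.tail a)) := by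
        rw [Fin.cons_self_tail]; exact infHammingDist_le ha
    _ ≤ hammingDist y (Fin.tail a) + 1 := by rw [hammingDist_cons]; split_ifs <;> simp
    _ = infHammingDist y (A.image Fin.tail) + 1 := by rw [hyb]

variable [Fintype α]

def sliceCons (A : Finset (Fin (r + 1) → α)) (c : α) : Finset (Fin r → α) :=
  {y | Fin.cons c y ∈ A}

theorem card_eq_sum_card_sliceCons (A : Finset (Fin (r + 1) → α)) :
    #A = ∑ c, #(sliceCons A c) := by
  simp only [sliceCons, card_filter]
  rw [← Fin.sum_univ_fun_succ fun x => if x ∈ A then 1 else 0, ← card_filter,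
    filter_mem_eq_inter, Finset.univ_inter]

theorem sliceCons_subset_image_tail (A : Finset (Fin (r + 1) → α)) (c : α) :
    sliceCons A c ⊆ A.image Fin.tail := fun y hy =>
  mem_image.2 ⟨Fin.cons c y, (mem_filter.1 hy).2, by simp⟩

theorem infHammingDist_cons_le_sliceCons {A : Finset (Fin (r + 1) → α)} {c : α}
    (hA : (sliceCons A c).Nonempty) (y : Fin r → α) :
    infHammingDist (Fin.cons c y) A ≤ infHammingDist y (sliceCons A c) := by
  obtain ⟨b, hb, hyb⟩ := exists_hammingDist_eq_infHammingDist y hA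
  calc infHammingDist (Fin.cons c y) A
      ≤ hammingDist (Fin.cons c y : Fin (r + 1) → α) (Fin.cons c b) :=
        infHammingDist_le (mem_filter.1 hb).2
    _ = infHammingDist y (sliceCons A c) := by simp [hammingDist_cons, hyb]

theorem sum_exp_infHammingDist_cons_mul_sq_le {l K : ℝ} (hl : 0 ≤ l)
    (hK : ∀ B : Finset (Fin r → α), (∑ y, exp (l * infHammingDist y B)) * #B ≤ K)
    {A : Finset (Fin (r + 1) → α)} (hA : A.Nonempty) (c : α) :
    (∑ y, exp (l * infHammingDist (Fin.cons c y) A)) * #(A.image Fin.tail) ^ 2 ≤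
      exp (l ^ 2) * (2 * #(A.image Fin.tail) - #(sliceCons A c)) * K := by
  set T : Finset (Fin r → α) := A.image Fin.tail
  have hK0 : 0 ≤ K := by simpa using hK ∅
  refine mul_sq_le_exp_sq_mul_of_mul_le hl (by positivity) hK0 (Nat.cast_nonneg _)
    (Nat.cast_le.2 (card_le_card (sliceCons_subset_image_tail A c))) ?_ ?_
  · rcases (sliceCons A c).eq_empty_or_nonempty with h | h
    · simpa [h] using hK0
    refine le_trans ?_ (hK (sliceCons A c))
    gcongr with y
    exact infHammingDist_cons_le_sliceCons h y
  · calc _ ≤ (exp l * ∑ y, exp (l * infHammingDist y T)) * (#T : ℝ) := by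
          gcongr
          rw [mul_sum]
          gcongr with y
          rw [← exp_add]
          gcongr
          have : (infHammingDist (Fin.cons c y) A : ℝ) ≤ infHammingDist y T + 1 := by
            exact_mod_cast infHammingDist_cons_le_image_tail hA c y
          nlinarith
      _ = exp l * ((∑ y, exp (l * infHammingDist y T)) * #T) := by ring
      _ ≤ exp l * K := by gcongr; exact hK T

theorem sum_exp_infHammingDist_mul_card_le_succ {l K : ℝ} (hl : 0 ≤ l)
    (hK : ∀ B : Finset (Fin r → α), (∑ y, exp (l * infHammingDist y B)) * #B ≤ K)
    (A : Finset (Fin (r + 1) → α)) :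
    (∑ x, exp (l * infHammingDist x A)) * #A ≤ (Fintype.card α : ℝ) ^ 2 * exp (l ^ 2) * K := by
  have hK0 : 0 ≤ K := by simpa using hK ∅
  rcases A.eq_empty_or_nonempty with rfl | hA
  · simp only [Finset.card_empty, Nat.cast_zero, mul_zero]
    positivity
  set n : ℝ := (Fintype.card α : ℝ)
  set M : ℝ := (#(A.image Fin.tail) : ℝ)
  set S : ℝ := (#A : ℝ)
  have hM : 0 < M := by simpa [M] using hA.image Fin.tail
  have hsum : (∑ x, exp (l * infHammingDist x A)) * M ^ 2 ≤
      exp (l ^ 2) * (2 * n * M - S) * K := by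
    rw [Fin.sum_univ_fun_succ, sum_mul]
    calc _ ≤ ∑ c, exp (l ^ 2) * (2 * M - #(sliceCons A c)) * K :=
          sum_le_sum fun c _ => sum_exp_infHammingDist_cons_mul_sq_le hl hK hA c
      _ = exp (l ^ 2) * (2 * n * M - S) * K := by
          simp only [S, card_eq_sum_card_sliceCons A, Nat.cast_sum, ← sum_mul, ← mul_sum,
            sum_sub_distrib, sum_const, card_univ, nsmul_eq_mul, n]
          ring
  have hamgm : (2 * n * M - S) * S ≤ n ^ 2 * M ^ 2 := by nlinarith [sq_nonneg (n * M - S)]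
  refine le_of_mul_le_mul_right ?_ (pow_pos hM 2)
  calc (∑ x, exp (l * infHammingDist x A)) * S * M ^ 2
      = (∑ x, exp (l * infHammingDist x A)) * M ^ 2 * S := by ring
    _ ≤ exp (l ^ 2) * (2 * n * M - S) * K * S := by gcongr
    _ = exp (l ^ 2) * K * ((2 * n * M - S) * S) := by ring
    _ ≤ exp (l ^ 2) * K * (n ^ 2 * M ^ 2) := by gcongr
    _ = n ^ 2 * exp (l ^ 2) * K * M ^ 2 := by ring

theorem sum_exp_infHammingDist_mul_card_le {l : ℝ} (hl : 0 ≤ l) :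
    ∀ {r : ℕ} (A : Finset (Fin r → α)),
      (∑ x, exp (l * infHammingDist x A)) * #A ≤
        (Fintype.card α : ℝ) ^ (2 * r) * exp (l ^ 2 * r)
  | 0, A => by
    rcases A.eq_empty_or_nonempty with rfl | ⟨a, ha⟩
    · simp
    have hd : ∀ x, infHammingDist x A = 0 := fun x =>
      Nat.eq_zero_of_le_zero ((infHammingDist_le ha).trans_eq (by simp [Subsingleton.elim x a]))
    simpa [hd] using card_le_univ A
  | r + 1, A => by
    refine (sum_exp_infHammingDist_mul_card_le_succ hl
      (sum_exp_infHammingDist_mul_card_le hl) A).trans_eq ?_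
    push_cast
    rw [mul_add_one (l ^ 2), exp_add, mul_add_one 2 r, pow_add]
    ring

theorem mul_sum_exp_infHammingDist_le [Nonempty α] {δ l : ℝ} (hl : 0 ≤ l)
    {A : Finset (Fin r → α)} (hA : δ * Fintype.card α ^ r ≤ #A) :
    δ * ∑ x, exp (l * infHammingDist x A) ≤ Fintype.card α ^ r * exp (l ^ 2 * r) := by
  have hn : (0 : ℝ) < Fintype.card α ^ r := by positivity
  refine le_of_mul_le_mul_left ?_ hn
  calc (Fintype.card α : ℝ) ^ r * (δ * ∑ x, exp (l * infHammingDist x A))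
      = δ * Fintype.card α ^ r * ∑ x, exp (l * infHammingDist x A) := by ring
    _ ≤ #A * ∑ x, exp (l * infHammingDist x A) := by gcongr
    _ ≤ Fintype.card α ^ (2 * r) * exp (l ^ 2 * r) := by
        rw [mul_comm]; exact sum_exp_infHammingDist_mul_card_le hl A
    _ = Fintype.card α ^ r * (Fintype.card α ^ r * exp (l ^ 2 * r)) := by ring

theorem mul_sum_exp_infHammingDist_add_le [Nonempty α] {δ l : ℝ} (hδ : 0 ≤ δ) (hl : 0 ≤ l)
    {A B : Finset (Fin r → α)} (hA : δ * Fintype.card α ^ r ≤ #A)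
    (hB : δ * Fintype.card α ^ r ≤ #B) :
    δ * ∑ x, exp (l * (infHammingDist x A + infHammingDist x B)) ≤
      Fintype.card α ^ r * exp (4 * l ^ 2 * r) := by
  have exp_two_mul (d : ℝ) : exp (2 * l * d) = exp (l * d) ^ 2 := by
    rw [sq, ← exp_add]; ring_nf
  calc δ * ∑ x, exp (l * (infHammingDist x A + infHammingDist x B))
      ≤ δ * ∑ x, (exp (2 * l * infHammingDist x A) + exp (2 * l * infHammingDist x B)) / 2 := by
        gcongr with x
        rw [exp_two_mul, exp_two_mul, mul_add, exp_add]
        nlinarith [sq_nonneg (exp (l * infHammingDist x A) - exp (l * infHammingDist x B))]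
    _ = (δ * ∑ x, exp (2 * l * infHammingDist x A) +
          δ * ∑ x, exp (2 * l * infHammingDist x B)) / 2 := by
        rw [← sum_div, sum_add_distrib]; ring
    _ ≤ (Fintype.card α ^ r * exp ((2 * l) ^ 2 * r) +
          Fintype.card α ^ r * exp ((2 * l) ^ 2 * r)) / 2 := by
        gcongr (?_ + ?_) / 2
        · exact mul_sum_exp_infHammingDist_le (by positivity) hA
        · exact mul_sum_exp_infHammingDist_le (by positivity) hB
    _ = Fintype.card α ^ r * exp (4 * l ^ 2 * r) := by ring_nf

theorem exists_mul_hammingDist_le [Nonempty α] {δ l : ℝ} (hδ : 0 < δ) (hl : 0 ≤ l)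
    {A B : Finset (Fin r → α)} (hA : δ * Fintype.card α ^ r ≤ #A)
    (hB : δ * Fintype.card α ^ r ≤ #B) :
    ∃ a ∈ A, ∃ b ∈ B, l * hammingDist a b ≤ 4 * l ^ 2 * r - log δ := by
  have hsum : ∑ x, δ * exp (l * (infHammingDist x A + infHammingDist x B)) ≤
      ∑ _x : Fin r → α, exp (4 * l ^ 2 * r) := by
    rw [← mul_sum, sum_const, card_univ, Fintype.card_fun, Fintype.card_fin, nsmul_eq_mul]
    exact_mod_cast mul_sum_exp_infHammingDist_add_le hδ.le hl hA hB
  obtain ⟨x, -, hx⟩ := exists_le_of_sum_le univ_nonempty hsum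
  have hpos : (0 : ℝ) < δ * Fintype.card α ^ r := by positivity
  obtain ⟨a, ha, hxa⟩ := exists_hammingDist_eq_infHammingDist x
    (card_pos.1 (by exact_mod_cast hpos.trans_le hA))
  obtain ⟨b, hb, hxb⟩ := exists_hammingDist_eq_infHammingDist x
    (card_pos.1 (by exact_mod_cast hpos.trans_le hB))
  refine ⟨a, ha, b, hb, ?_⟩
  have htri : (hammingDist a b : ℝ) ≤ infHammingDist x A + infHammingDist x B := by
    rw [← hxa, ← hxb]; exact_mod_cast hammingDist_triangle_left a b x
  have hlog := log_le_log (by positivity) hx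
  rw [log_mul hδ.ne' (exp_pos _).ne', log_exp, log_exp] at hlog
  nlinarith [mul_le_mul_of_nonneg_left htri hl]

end Concentration

theorem exists_mul_hammingDist_inv_mul_le {G : Type*} [Group G] [Fintype G] [DecidableEq G]
    {r : ℕ} {δ l : ℝ} (hδ : 0 < δ) (hl : 0 ≤ l) {A : Finset (Fin r → G)}
    (hA : δ * Fintype.card G ^ r ≤ #A) (x : Fin r → G) :
    ∃ a₁ ∈ A, ∃ a₂ ∈ A, l * hammingDist x (a₁⁻¹ * a₂) ≤ 4 * l ^ 2 * r - log δ := by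
  have hAx : δ * Fintype.card G ^ r ≤ #(A.image (· * x)) := by
    rwa [card_image_of_injective _ (mul_left_injective x)]
  obtain ⟨b, hb, a₂, ha₂, h⟩ := exists_mul_hammingDist_le hδ hl hAx hA
  obtain ⟨a₁, ha₁, rfl⟩ := mem_image.1 hb
  refine ⟨a₁, ha₁, a₂, ha₂, ?_⟩
  rw [← hammingDist_comp (fun i => (a₁ i * ·)) fun i => mul_right_injective _]
  convert h using 4 <;> ext i <;> simp

theorem hamDist_le_hammingDist_s16 {r : ℕ} {x y : Fin r → ℂ} (hx : ∀ j, ‖x j‖ ≤ 1)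
    (hy : ∀ j, ‖y j‖ ≤ 1) : hamDist x y ≤ hammingDist x y := by
  rw [hamDist, hammingDist, card_filter]
  push_cast
  gcongr with j
  split_ifs with h
  · linarith [norm_sub_le (x j) (y j), hx j, hy j]
  · simp [not_not.1 h]

section RootsOfUnity

variable {k r : ℕ}

def coeRoots (g : Fin r → rootsOfUnity k ℂ) : Fin r → ℂ := fun j => ((g j : ℂˣ) : ℂ)

theorem coeRoots_injective : Function.Injective (coeRoots (k := k) (r := r)) :=
  fun _ _ h => funext fun j => Subtype.ext (Units.ext (congrFun h j))

theorem range_coeRoots [NeZero k] : range (coeRoots (k := k) (r := r)) = rootsPow k r := by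
  ext y
  constructor
  · rintro ⟨g, rfl⟩ j
    exact (mem_rootsOfUnity' k _).1 (g j).2
  · intro hy
    exact ⟨fun j => rootsOfUnity.mkOfPowEq (y j) (hy j),
      funext fun j => rootsOfUnity.coe_mkOfPowEq (hy j)⟩

theorem coeRoots_inv_mul (g h : Fin r → rootsOfUnity k ℂ) :
    coeRoots (g⁻¹ * h) = fun j => (coeRoots g j)⁻¹ * coeRoots h j := by
  ext j
  simp [coeRoots]

theorem hamDist_coeRoots_le [NeZero k] (g h : Fin r → rootsOfUnity k ℂ) :
    hamDist (coeRoots g) (coeRoots h) ≤ hammingDist g h := by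
  have norm_coeRoots (g : Fin r → rootsOfUnity k ℂ) (j : Fin r) : ‖coeRoots g j‖ ≤ 1 :=
    (Complex.norm_eq_one_of_mem_rootsOfUnity (g j).2).le
  exact (hamDist_le_hammingDist_s16 (norm_coeRoots g) (norm_coeRoots h)).trans <| by
    exact_mod_cast hammingDist_comp_le_hammingDist fun _ (z : rootsOfUnity k ℂ) => ((z : ℂˣ) : ℂ)

end RootsOfUnity

/-- For all `ε, δ > 0` and `k ∈ ℕ` there is `N` such that whenever `r > N` and
`A ⊆ Λ_k^r` has `|A| ≥ δ|Λ_k^r|`, for every `x ∈ Λ_k^r` there are `a₁, a₂ ∈ A` with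
`a₁⁻¹a₂ ∈ U_{r·ε}(x)`. -/
theorem statement16 (ε δ : ℝ) (hε : 0 < ε) (hδ : 0 < δ) (k : ℕ) (hk : 0 < k) :
    ∃ N : ℕ, ∀ r : ℕ, N < r → ∀ A : Set (Fin r → ℂ), A ⊆ rootsPow k r →
      δ * Nat.card (rootsPow k r) ≤ Nat.card A →
      ∀ x ∈ rootsPow k r, ∃ a₁ ∈ A, ∃ a₂ ∈ A,
        (fun j => (a₁ j)⁻¹ * a₂ j) ∈ hammingBall k r (r * ε) x := by
  classical
  have : NeZero k := ⟨hk.ne'⟩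
  let : Fintype (rootsOfUnity k ℂ) := Fintype.ofFinite _
  refine ⟨⌈-16 * log δ / ε ^ 2⌉₊, fun r hr A hA hcard x hx => ?_⟩
  have hr : -16 * log δ < ε ^ 2 * r := by
    rw [← div_lt_iff₀' (by positivity)]
    exact (Nat.le_ceil _).trans_lt (by exact_mod_cast hr)
  rw [← range_coeRoots] at hA hcard hx
  obtain ⟨x, rfl⟩ := hx
  set A' : Finset (Fin r → rootsOfUnity k ℂ) := (coeRoots ⁻¹' A).toFinset
  have hA' : δ * Fintype.card (rootsOfUnity k ℂ) ^ r ≤ #A' := by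
    rw [Nat.card_range_of_injective coeRoots_injective, Nat.card_eq_fintype_card,
      Fintype.card_fun, Fintype.card_fin] at hcard
    rw [← Nat.card_eq_card_toFinset, Nat.card_preimage_of_injective coeRoots_injective hA]
    exact_mod_cast hcard
  -- with `l = ε / 8` the bound reads `d ≤ ε r / 2 - 8 log δ / ε`, which is `< ε r` by `hr`
  obtain ⟨a₁, ha₁, a₂, ha₂, hd⟩ :=
    exists_mul_hammingDist_inv_mul_le hδ (l := ε / 8) (by positivity) hA' x
  refine ⟨coeRoots a₁, by simpa [A'] using ha₁, coeRoots a₂, by simpa [A'] using ha₂, ?_⟩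
  rw [← coeRoots_inv_mul, hammingBall, ← range_coeRoots]
  refine ⟨mem_range_self _, (hamDist_coeRoots_le _ _).trans ?_⟩
  have : ε * hammingDist x (a₁⁻¹ * a₂) < ε * (r * ε) := by nlinarith
  exact (lt_of_mul_lt_mul_left this hε.le).le
end
end

section
/- Let F ⊆ ℤ be a finite set and let A ⊆ ℤ. Then there exists n ∈ ℤ such that |(A − n) ∩ F| ≥ d*(A) · |F|. -/
/-!
Let `c = max_n |(A - n) ∩ F|`. Double counting the pairs `(f, x) ∈ F × I` with `f + x ∈ A`
over a window `I` of length `N` gives `∑_{f ∈ F} |A ∩ (f + I)| ≤ N c`, and each shifted window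
`f + I` meets `A` in at least `|A ∩ I| - |f|` points. Hence `|F| |A ∩ I| ≤ N c + |F| max_f |f|`,
and dividing by `N` and letting `N → ∞` gives `d*(A) |F| ≤ c`.
-/

noncomputable section

open Set Filter

/-- The upper Banach density of a set of integers:
`d*(A) = lim_{N → ∞} sup_M |A ∩ [M, M+N-1]| / N`. -/
noncomputable def upperBanachDensity (A : Set ℤ) : ℝ :=
  limsup (fun N : ℕ => ⨆ M : ℤ, (Nat.card ↥(A ∩ Set.Icc M (M + N - 1)) : ℝ) / N) atTop

open scoped Finset

namespace Int

variable (p : ℤ → Prop) [DecidablePred p]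

lemma card_filter_Ico_add_left (a b f : ℤ) :
    #{n ∈ Finset.Ico a b | p (f + n)} = #{x ∈ Finset.Ico (f + a) (f + b) | p x} := by
  rw [← Finset.map_add_left_Ico, Finset.filter_map, Finset.card_map]
  rfl

lemma card_filter_Ico_le_card_filter_Ico_add_left (a b f : ℤ) :
    #{x ∈ Finset.Ico a b | p x} ≤ #{x ∈ Finset.Ico (f + a) (f + b) | p x} + f.natAbs := by
  have hsub : {x ∈ Finset.Ico a b | p x} ⊆
      {x ∈ Finset.Ico (f + a) (f + b) | p x} ∪ (Finset.Ico a (f + a) ∪ Finset.Ico (f + b) b) := by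
    intro x hx
    simp only [Finset.mem_filter, Finset.mem_Ico, Finset.mem_union] at hx ⊢
    by_cases hshift : f + a ≤ x ∧ x < f + b
    · exact Or.inl ⟨hshift, hx.2⟩
    · omega
  calc #{x ∈ Finset.Ico a b | p x}
      ≤ #{x ∈ Finset.Ico (f + a) (f + b) | p x}
          + (#(Finset.Ico a (f + a)) + #(Finset.Ico (f + b) b)) :=
        (Finset.card_le_card hsub).trans <| (Finset.card_union_le _ _).trans <|
          Nat.add_le_add_left (Finset.card_union_le _ _) _
    _ = #{x ∈ Finset.Ico (f + a) (f + b) | p x} + f.natAbs := by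
        rw [card_Ico, card_Ico]
        omega

lemma card_mul_card_filter_Ico_le (F : Finset ℤ) (c : ℕ)
    (hc : ∀ n, #{f ∈ F | p (f + n)} ≤ c) (a b : ℤ) :
    #F * #{x ∈ Finset.Ico a b | p x} ≤ (b - a).toNat * c + #F * F.sup natAbs := by
  have hswap : ∑ f ∈ F, #{n ∈ Finset.Ico a b | p (f + n)}
      = ∑ n ∈ Finset.Ico a b, #{f ∈ F | p (f + n)} := by
    simp only [Finset.card_filter]
    exact Finset.sum_comm
  calc #F * #{x ∈ Finset.Ico a b | p x}
      = ∑ _f ∈ F, #{x ∈ Finset.Ico a b | p x} := by rw [Finset.sum_const, smul_eq_mul]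
    _ ≤ ∑ f ∈ F, (#{n ∈ Finset.Ico a b | p (f + n)} + F.sup natAbs) := by
        gcongr with f hf
        rw [card_filter_Ico_add_left]
        exact (card_filter_Ico_le_card_filter_Ico_add_left p a b f).trans
          (Nat.add_le_add_left (Finset.le_sup (f := natAbs) hf) _)
    _ = ∑ n ∈ Finset.Ico a b, #{f ∈ F | p (f + n)} + #F * F.sup natAbs := by
        rw [Finset.sum_add_distrib, hswap, Finset.sum_const, smul_eq_mul]
    _ ≤ ∑ _n ∈ Finset.Ico a b, c + #F * F.sup natAbs := by gcongr with n; exact hc n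
    _ = (b - a).toNat * c + #F * F.sup natAbs := by
        rw [Finset.sum_const, smul_eq_mul, card_Ico]

end Int

lemma natCard_inter_Icc_eq (A : Set ℤ) [DecidablePred (· ∈ A)] (M : ℤ) (N : ℕ) :
    Nat.card ↥(A ∩ Set.Icc M (M + N - 1)) = #{x ∈ Finset.Ico M (M + N) | x ∈ A} := by
  rw [Nat.card_coe_set_eq, ← Set.ncard_coe_finset, Finset.coe_filter]
  congr 1
  ext x
  simp only [Set.mem_inter_iff, Set.mem_Icc, Set.mem_ofPred_eq, Finset.mem_Ico,
    Int.le_sub_one_iff]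
  tauto

lemma natCard_image_sub_inter_eq (A : Set ℤ) [DecidablePred (· ∈ A)] (F : Finset ℤ) (n : ℤ) :
    Nat.card ↥((fun a => a - n) '' A ∩ ↑F) = #{f ∈ F | f + n ∈ A} := by
  rw [Nat.card_coe_set_eq, ← Set.ncard_coe_finset, Finset.coe_filter]
  congr 1
  ext f
  simp only [Set.mem_inter_iff, Set.mem_image, sub_eq_iff_eq_add, exists_eq_right, Finset.mem_coe,
    Set.mem_ofPred_eq]
  exact and_comm

lemma upperBanachDensity_le (A : Set ℤ) (α C : ℝ)
    (h : ∀ (M : ℤ) (N : ℕ), (Nat.card ↥(A ∩ Set.Icc M (M + N - 1)) : ℝ) ≤ α * N + C) :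
    upperBanachDensity A ≤ α := by
  have hbound : (fun N : ℕ => ⨆ M : ℤ, (Nat.card ↥(A ∩ Set.Icc M (M + N - 1)) : ℝ) / N)
      ≤ᶠ[atTop] fun N => α + C / N := by
    filter_upwards [eventually_gt_atTop 0] with N hN
    refine ciSup_le fun M => ?_
    rw [div_le_iff₀ (by exact_mod_cast hN), add_mul, div_mul_cancel₀ _ (by positivity)]
    exact h M N
  have hlim : Tendsto (fun N : ℕ => α + C / N) atTop (nhds α) := by
    simpa using tendsto_const_nhds.add (tendsto_const_div_atTop_nhds_zero_nat C)
  calc upperBanachDensity A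
      ≤ limsup (fun N : ℕ => α + C / N) atTop :=
        limsup_le_limsup hbound
          (isCoboundedUnder_le_of_le atTop fun N => Real.iSup_nonneg fun M => by positivity)
          hlim.isBoundedUnder_le
    _ = α := hlim.limsup_eq

lemma Finset.exists_forall_card_filter_le {ι α : Type*} [Nonempty ι] (F : Finset α)
    (p : ι → α → Prop) [∀ n, DecidablePred (p n)] :
    ∃ n₀, ∀ n, #{f ∈ F | p n f} ≤ #{f ∈ F | p n₀ f} := by
  have hbdd : BddAbove (Set.range fun n => #{f ∈ F | p n f}) :=
    ⟨#F, by rintro _ ⟨n, rfl⟩; exact Finset.card_filter_le _ _⟩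
  obtain ⟨n₀, hn₀ : #{f ∈ F | p n₀ f} = _⟩ := Nat.sSup_mem (Set.range_nonempty _) hbdd
  exact ⟨n₀, fun n => hn₀ ▸ le_csSup hbdd ⟨n, rfl⟩⟩

/-- For every finite `F ⊆ ℤ` and every `A ⊆ ℤ` there is `n ∈ ℤ` with
`|(A - n) ∩ F| ≥ d*(A)·|F|`. -/
theorem statement19 (F : Finset ℤ) (A : Set ℤ) :
    ∃ n : ℤ, upperBanachDensity A * F.card ≤ Nat.card ↥((fun a => a - n) '' A ∩ ↑F) := by
  classical
  obtain rfl | hF := F.eq_empty_or_nonempty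
  · exact ⟨0, by simp⟩
  obtain ⟨n₀, hmax⟩ := F.exists_forall_card_filter_le fun n f => f + n ∈ A
  refine ⟨n₀, ?_⟩
  have hF' : (0 : ℝ) < #F := by exact_mod_cast hF.card_pos
  rw [natCard_image_sub_inter_eq, ← le_div_iff₀ hF']
  refine upperBanachDensity_le A _ (F.sup Int.natAbs : ℕ) fun M N => ?_
  have key := Int.card_mul_card_filter_Ico_le (· ∈ A) F _ hmax M (M + N)
  rw [add_sub_cancel_left, Int.toNat_natCast] at key
  rw [natCard_inter_Icc_eq, div_mul_eq_mul_div, div_add' _ _ _ hF'.ne', le_div_iff₀' hF']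
  exact_mod_cast key.trans_eq (by ring)
end
end
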